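/- Let m > 0 and P ∈ ℝ^d be fixed, P ≠ 0. The map n ↦ E₀⁽ⁿ⁺¹⁾(P) − E₀⁽ⁿ⁾(P) of energy increments is strictly increasing in n. -/
import Mathlib

private lemma cs_le' (x1 y1 x2 y2 : ℝ) :
    x1*x2 + y1*y2 ≤ Real.sqrt (x1^2+y1^2) * Real.sqrt (x2^2+y2^2) := by
  rw [← Real.sqrt_mul (by positivity)]
  calc x1*x2+y1*y2 ≤ |x1*x2+y1*y2| := le_abs_self _
    _ = Real.sqrt ((x1*x2+y1*y2)^2) := (Real.sqrt_sq_eq_abs _).symm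
    _ ≤ Real.sqrt ((x1^2+y1^2)*(x2^2+y2^2)) :=
        Real.sqrt_le_sqrt (by nlinarith [sq_nonneg (x1*y2 - x2*y1)])

private lemma cs_lt' (x1 y1 x2 y2 : ℝ) (h : x1*y2 ≠ x2*y1) :
    x1*x2 + y1*y2 < Real.sqrt (x1^2+y1^2) * Real.sqrt (x2^2+y2^2) := by
  rw [← Real.sqrt_mul (by positivity)]
  have h0 : (0:ℝ) < (x1*y2 - x2*y1)^2 := by
    have := sub_ne_zero_of_ne h
    positivity
  calc x1*x2+y1*y2 ≤ |x1*x2+y1*y2| := le_abs_self _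
    _ = Real.sqrt ((x1*x2+y1*y2)^2) := (Real.sqrt_sq_eq_abs _).symm
    _ < Real.sqrt ((x1^2+y1^2)*(x2^2+y2^2)) := by
        apply Real.sqrt_lt_sqrt (by positivity)
        nlinarith

private lemma min_lemma' (m p k c0 x : ℝ) (hk : 0 < m^2*k^2)
    (hfix : c0 = (p - c0)/Real.sqrt (m^2*k^2+(p-c0)^2)) :
    c0^2/2 + Real.sqrt (m^2*k^2+(p-c0)^2) + (x-c0)^2/2
      ≤ x^2/2 + Real.sqrt (m^2*k^2+(p-x)^2) := by
  set s := Real.sqrt (m^2*k^2+(p-c0)^2) with hsdef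
  have hs : 0 < s := Real.sqrt_pos.mpr (by nlinarith [sq_nonneg (p-c0)])
  have hs2 : s^2 = m^2*k^2+(p-c0)^2 := Real.sq_sqrt (by nlinarith [sq_nonneg (p-c0)])
  have hcs : c0 * s = p - c0 := by
    field_simp at hfix; linarith [hfix]
  set T := Real.sqrt (m^2*k^2+(p-x)^2) with hTdef
  have key : m^2*k^2 + (p-c0)*(p-x) ≤ s * T := by
    have := cs_le' (m*k) (p-c0) (m*k) (p-x)
    calc m^2*k^2 + (p-c0)*(p-x) = (m*k)*(m*k) + (p-c0)*(p-x) := by ring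
      _ ≤ Real.sqrt ((m*k)^2+(p-c0)^2) * Real.sqrt ((m*k)^2+(p-x)^2) := this
      _ = s * T := by rw [hsdef, hTdef]; ring_nf
  have h1 : s*(s + c0*(c0-x)) = m^2*k^2 + (p-c0)*(p-x) := by
    linear_combination hs2 + (c0-x)*hcs
  have hT : s + c0*(c0-x) ≤ T := by
    have h2 : s*(s + c0*(c0-x)) ≤ s*T := by rw [h1]; exact key
    exact le_of_mul_le_mul_left h2 hs
  nlinarith [hT]

private lemma sq_mid_lt (mn m2 pa pb S A B : ℝ)
    (hS2 : (2*S)^2 = (mn+m2)^2 + (pa+pb)^2)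
    (hA2 : A^2 = mn^2+pa^2) (hB2 : B^2 = m2^2+pb^2)
    (hAB : mn*m2+pa*pb < A*B) : (2*S)^2 < (A+B)^2 := by nlinarith

private lemma sq_mid_le (mn m2 pa pb S A B : ℝ)
    (hS2 : (2*S)^2 = (mn+m2)^2 + (pa+pb)^2)
    (hA2 : A^2 = mn^2+pa^2) (hB2 : B^2 = m2^2+pb^2)
    (hAB : mn*m2+pa*pb ≤ A*B) : (2*S)^2 ≤ (A+B)^2 := by nlinarith

private lemma unsq_lt (S A B : ℝ) (h : (2*S)^2 < (A+B)^2)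
    (hS : 0 ≤ S) (hA : 0 ≤ A) (hB : 0 ≤ B) : 2*S < A+B := by nlinarith

private lemma unsq_le (S A B : ℝ) (h : (2*S)^2 ≤ (A+B)^2)
    (hS : 0 ≤ S) (hA : 0 ≤ A) (hB : 0 ≤ B) : 2*S ≤ A+B := by nlinarith

set_option maxHeartbeats 800000 in
/-- For fixed `m > 0` and `P ≠ 0`, the map `n ↦ E₀⁽ⁿ⁺¹⁾(P) − E₀⁽ⁿ⁾(P)` of energy
increments of the massive Nelson model is strictly increasing in `n`. -/
theorem energy_increments_strict_mono
    (d : ℕ) (m : ℝ) (hm : 0 < m)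
    (P : EuclideanSpace ℝ (Fin d)) (hP : P ≠ 0)
    (c : ℕ → ℝ)
    (hc : ∀ n : ℕ, 1 ≤ n → c n ∈ Set.Ico (0 : ℝ) 1 ∧
      c n = (‖P‖ - c n) / Real.sqrt (m ^ 2 * (n : ℝ) ^ 2 + (‖P‖ - c n) ^ 2))
    (E : ℕ → ℝ)
    (hE : ∀ n : ℕ, E n =
      (c n) ^ 2 / 2 + Real.sqrt (m ^ 2 * (n : ℝ) ^ 2 + (‖P‖ - c n) ^ 2)) :
    ∀ n : ℕ, 1 ≤ n → E (n + 1) - E n < E (n + 2) - E (n + 1) := by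
  intro n hn
  set p := ‖P‖ with hpdef
  have hp : 0 < p := norm_pos_iff.mpr hP
  have hn1 : (1:ℝ) ≤ (n:ℝ) := by exact_mod_cast hn
  have hpc : ∀ k : ℕ, 1 ≤ k → 0 < p - c k := by
    intro k hk
    obtain ⟨⟨hk0, _⟩, hkfix⟩ := hc k hk
    have hk1 : (1:ℝ) ≤ (k:ℝ) := by exact_mod_cast hk
    have hmk : 0 < m ^ 2 * (k:ℝ) ^ 2 := by
      have hkpos : (0:ℝ) < (k:ℝ) := by linarith
      positivity
    have hs : 0 < Real.sqrt (m ^ 2 * (k:ℝ) ^ 2 + (p - c k) ^ 2) :=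
      Real.sqrt_pos.mpr (by nlinarith [sq_nonneg (p - c k)])
    have hcs : c k * Real.sqrt (m ^ 2 * (k:ℝ) ^ 2 + (p - c k) ^ 2) = p - c k := by
      field_simp at hkfix; linarith
    rcases eq_or_lt_of_le hk0 with h0 | h0
    · exfalso
      rw [← h0] at hcs
      simp at hcs
      linarith
    · nlinarith [mul_pos h0 hs]
  have ha := hpc n hn
  have hb := hpc (n+2) (by omega)
  set a := c n with hadef
  set b := c (n+2) with hbdef
  set A := Real.sqrt (m ^ 2 * (n:ℝ) ^ 2 + (p - a) ^ 2) with hAdef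
  set B := Real.sqrt (m ^ 2 * ((n:ℝ)+2) ^ 2 + (p - b) ^ 2) with hBdef
  set mid := (a+b)/2 with hmiddef
  set S := Real.sqrt (m ^ 2 * ((n:ℝ)+1) ^ 2 + (p - mid) ^ 2) with hSdef
  have hcast2 : ((n+2:ℕ):ℝ) = (n:ℝ)+2 := by push_cast; ring
  have hcast1 : ((n+1:ℕ):ℝ) = (n:ℝ)+1 := by push_cast; ring
  have hEn : E n = a^2/2 + A := by rw [hE n]
  have hEn2 : E (n+2) = b^2/2 + B := by rw [hE (n+2), hcast2]
  have hmin : E (n+1) ≤ mid^2/2 + S := by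
    have hfix := (hc (n+1) (by omega)).2
    rw [hcast1] at hfix
    have hmk : 0 < m^2*((n:ℝ)+1)^2 := by positivity
    have := min_lemma' m p ((n:ℝ)+1) (c (n+1)) mid hmk hfix
    rw [hE (n+1), hcast1]
    linarith [this, sq_nonneg (mid - c (n+1))]
  have hA2 : A^2 = (m*(n:ℝ))^2 + (p - a) ^ 2 := by
    rw [hAdef, Real.sq_sqrt (by positivity)]; ring
  have hB2 : B^2 = (m*((n:ℝ)+2))^2 + (p - b) ^ 2 := by
    rw [hBdef, Real.sq_sqrt (by positivity)]; ring
  have hS2 : (2*S)^2 = (m*(n:ℝ) + m*((n:ℝ)+2))^2 + ((p-a)+(p-b))^2 := by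
    rw [hSdef, mul_pow, Real.sq_sqrt (by positivity), hmiddef]; ring
  have hA0 : 0 ≤ A := Real.sqrt_nonneg _
  have hB0 : 0 ≤ B := Real.sqrt_nonneg _
  have hS0 : 0 ≤ S := Real.sqrt_nonneg _
  rw [hEn, hEn2]
  by_cases hab : a = b
  · have hne : (m*(n:ℝ))*(p-b) ≠ (m*((n:ℝ)+2))*(p-a) := by
      rw [← hab] at hb ⊢
      intro h
      nlinarith [mul_pos hm hb]
    have hAB : (m*(n:ℝ))*(m*((n:ℝ)+2)) + (p-a)*(p-b) < A * B := by
      have := cs_lt' (m*(n:ℝ)) (p-a) (m*((n:ℝ)+2)) (p-b) hne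
      calc (m*(n:ℝ))*(m*((n:ℝ)+2)) + (p-a)*(p-b)
          < Real.sqrt ((m*(n:ℝ))^2+(p-a)^2) * Real.sqrt ((m*((n:ℝ)+2))^2+(p-b)^2) := this
        _ = A * B := by
            rw [hAdef, hBdef,
              show (m*(n:ℝ))^2+(p-a)^2 = m^2*(n:ℝ)^2+(p-a)^2 from by ring,
              show (m*((n:ℝ)+2))^2+(p-b)^2 = m^2*((n:ℝ)+2)^2+(p-b)^2 from by ring]
    have h4S := sq_mid_lt _ _ _ _ _ _ _ hS2 hA2 hB2 hAB
    have hSlt : 2*S < A + B := unsq_lt _ _ _ h4S hS0 hA0 hB0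
    have hmm : mid^2 = (a^2+b^2)/2 := by rw [hmiddef, hab]; ring
    linarith [hmin]
  · have hAB : (m*(n:ℝ))*(m*((n:ℝ)+2)) + (p-a)*(p-b) ≤ A * B := by
      have := cs_le' (m*(n:ℝ)) (p-a) (m*((n:ℝ)+2)) (p-b)
      calc (m*(n:ℝ))*(m*((n:ℝ)+2)) + (p-a)*(p-b)
          ≤ Real.sqrt ((m*(n:ℝ))^2+(p-a)^2) * Real.sqrt ((m*((n:ℝ)+2))^2+(p-b)^2) := this
        _ = A * B := by
            rw [hAdef, hBdef,
              show (m*(n:ℝ))^2+(p-a)^2 = m^2*(n:ℝ)^2+(p-a)^2 from by ring,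
              show (m*((n:ℝ)+2))^2+(p-b)^2 = m^2*((n:ℝ)+2)^2+(p-b)^2 from by ring]
    have h4S := sq_mid_le _ _ _ _ _ _ _ hS2 hA2 hB2 hAB
    have hSle : 2*S ≤ A + B := unsq_le _ _ _ h4S hS0 hA0 hB0
    have hmm : mid^2 < (a^2+b^2)/2 := by
      have h0 : (0:ℝ) < (a-b)^2 := by
        have := sub_ne_zero_of_ne hab
        positivity
      rw [hmiddef]; nlinarith
    linarith [hmin]
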